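/- arXiv:2605.05742 — 3 statements merged into one kernel-verified Lean document; each statement's English description precedes it below -/
import Mathlib

section
/- Let u, v be nonzero vectors in R^d and Σ positive definite with largest eigenvalue λ_max. Then the operator norm of the Hessian of u ↦ cos_Σ(u,v) is at most (2/√3) · λ_max/‖u‖_Σ². -/
open Matrix RealInnerProductSpace

variable {d : ℕ}

/-- `Σ`-inner product on Euclidean space. -/
noncomputable def sInner (S : Matrix (Fin d) (Fin d) ℝ)
    (x y : EuclideanSpace ℝ (Fin d)) : ℝ :=
  ⟪x, Matrix.toEuclideanLin S y⟫

/-- `Σ`-norm on Euclidean space. -/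
noncomputable def sNorm (S : Matrix (Fin d) (Fin d) ℝ)
    (x : EuclideanSpace ℝ (Fin d)) : ℝ :=
  Real.sqrt (sInner S x x)

/-- `Σ`-cosine similarity on Euclidean space. -/
noncomputable def sCos (S : Matrix (Fin d) (Fin d) ℝ)
    (u v : EuclideanSpace ℝ (Fin d)) : ℝ :=
  sInner S u v / (sNorm S u * sNorm S v)

/-!
Write `Σ = Rᵀ R`. Then `cos_Σ(w, v) = f (R w)` with `f z = ⟪y, z⟫ / ‖z‖` and `y = R v / ‖R v‖`,
so the Hessian of `cos_Σ(·, v)` at `u` is `D²f(R u)(R ·, R ·)`, of norm at most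
`‖D²f(R u)‖ ‖R‖² ≤ λ_max ‖D²f(R u)‖`. For `z = ‖z‖ x` with `‖x‖ = 1`,
`D²f(z)(h, k) = -⟪y, ⟪x, h⟫ k + ⟪x, k⟫ h + (⟪h, k⟫ - 3 ⟪x, h⟫ ⟪x, k⟫) x⟫ / ‖z‖²`, and the vector on
the right has norm at most `(2/√3) ‖h‖ ‖k‖` by Cauchy–Schwarz, applied both to `h, k` and to their
components orthogonal to `x`. Finally `‖R u‖ = ‖u‖_Σ`.
-/

section InnerDivNorm

variable {F : Type*} [NormedAddCommGroup F] [InnerProductSpace ℝ F]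

theorem hasFDerivAt_inv_norm {z : F} (hz : z ≠ 0) :
    HasFDerivAt (fun w : F => ‖w‖⁻¹) (-(‖z‖⁻¹ ^ 3) • innerSL ℝ z) z := by
  have h := (hasDerivAt_inv (by positivity : √(‖z‖ ^ 2) ≠ 0)).comp_hasFDerivAt z
    ((hasStrictFDerivAt_norm_sq z).hasFDerivAt.sqrt (by positivity))
  simp only [Real.sqrt_sq (norm_nonneg _)] at h
  refine h.congr_fderiv ?_
  ext k
  simp only [one_div, _root_.mul_inv_rev, neg_smul, _root_.neg_apply, _root_.smul_apply,
    coe_innerSL_apply, nsmul_eq_mul, Nat.cast_ofNat, smul_eq_mul, inv_pow, neg_inj]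
  field_simp

theorem hasFDerivAt_inner_div_norm (y : F) {z : F} (hz : z ≠ 0) :
    HasFDerivAt (fun w : F => ⟪y, w⟫ / ‖w‖)
      (‖z‖⁻¹ • innerSL ℝ y - (⟪y, z⟫ * ‖z‖⁻¹ ^ 3) • innerSL ℝ z) z := by
  simp only [div_eq_mul_inv]
  refine ((innerSL ℝ y).hasFDerivAt.mul (hasFDerivAt_inv_norm hz)).congr_fderiv ?_
  ext k
  simp only [coe_innerSL_apply, inv_pow, neg_smul, smul_neg, _root_.add_apply, _root_.neg_apply,
    _root_.smul_apply, smul_eq_mul, _root_.sub_apply]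
  ring

theorem contDiffAt_inner_div_norm {n : WithTop ℕ∞} (y : F) {z : F} (hz : z ≠ 0) :
    ContDiffAt ℝ n (fun w : F => ⟪y, w⟫ / ‖w‖) z :=
  (contDiffAt_const.inner ℝ contDiffAt_id).div (contDiffAt_norm ℝ hz) (norm_ne_zero_iff.mpr hz)

open Filter Topology in
theorem fderiv_fderiv_inner_div_norm_apply (y : F) {z : F} (hz : z ≠ 0) (h k : F) :
    fderiv ℝ (fderiv ℝ fun w : F => ⟪y, w⟫ / ‖w‖) z h k =
      (3 * ⟪y, z⟫ * ⟪z, h⟫ * ⟪z, k⟫ / ‖z‖ ^ 2 - ⟪z, h⟫ * ⟪y, k⟫ - ⟪y, h⟫ * ⟪z, k⟫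
        - ⟪y, z⟫ * ⟪h, k⟫) / ‖z‖ ^ 3 := by
  have hgrad : fderiv ℝ (fun w : F => ⟪y, w⟫ / ‖w‖) =ᶠ[𝓝 z]
      fun w => ‖w‖⁻¹ • innerSL ℝ y - (⟪y, w⟫ * ‖w‖⁻¹ ^ 3) • innerSL ℝ w := by
    filter_upwards [isOpen_ne.mem_nhds hz] with w hw
    exact (hasFDerivAt_inner_div_norm y hw).fderiv
  -- `innerSL 𝕜` is only conjugate-linear; over `ℝ` it is linear, which `J` records.
  let J : F →L[ℝ] F →L[ℝ] ℝ := innerSL ℝ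
  have hJ (a b : F) : J a b = ⟪a, b⟫ := rfl
  have hinv := hasFDerivAt_inv_norm hz
  have hH := (hinv.smul_const (innerSL ℝ y)).fun_sub
    (((innerSL ℝ y).hasFDerivAt.fun_mul (hinv.pow 3)).fun_smul J.hasFDerivAt)
  simp only [innerSL_apply_apply] at hH
  rw [hgrad.fderiv_eq, hH.fderiv]
  simp only [inv_pow, neg_smul, Nat.add_one_sub_one, nsmul_eq_mul, Nat.cast_ofNat, smul_neg,
    _root_.sub_apply, ContinuousLinearMap.smulRight_apply, _root_.neg_apply, _root_.smul_apply,
    coe_innerSL_apply, smul_eq_mul, _root_.add_apply, hJ]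
  field_simp
  ring

theorem norm_hessianVector_le {x : F} (hx : ‖x‖ = 1) (h k : F) :
    ‖⟪x, h⟫ • k + ⟪x, k⟫ • h + (⟪h, k⟫ - 3 * ⟪x, h⟫ * ⟪x, k⟫) • x‖ ≤ 2 / √3 * (‖h‖ * ‖k‖) := by
  have hxx : ⟪x, x⟫ = 1 := by rw [real_inner_self_eq_norm_sq, hx, one_pow]
  have hgram := real_inner_mul_inner_self_le (h - ⟪x, h⟫ • x) (k - ⟪x, k⟫ • x)
  have hcs := real_inner_mul_inner_self_le h k
  refine le_of_pow_le_pow_left₀ two_ne_zero (by positivity) ?_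
  rw [mul_pow, mul_pow, div_pow, Real.sq_sqrt (by norm_num), ← real_inner_self_eq_norm_sq,
    ← real_inner_self_eq_norm_sq, ← real_inner_self_eq_norm_sq]
  simp only [inner_add_left, inner_add_right, inner_sub_left, inner_sub_right,
    real_inner_smul_left, real_inner_smul_right, hxx, real_inner_comm x h, real_inner_comm x k,
    real_inner_comm h k] at hgram ⊢
  nlinarith [sq_nonneg (⟪h, k⟫ - 3 * ⟪x, h⟫ * ⟪x, k⟫)]

theorem norm_fderiv_fderiv_inner_div_norm_le (y : F) {z : F} (hz : z ≠ 0) :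
    ‖fderiv ℝ (fderiv ℝ fun w : F => ⟪y, w⟫ / ‖w‖) z‖ ≤ 2 / √3 * ‖y‖ / ‖z‖ ^ 2 := by
  set x : F := ‖z‖⁻¹ • z
  have hx : ‖x‖ = 1 := norm_smul_inv_norm hz
  have hzx : z = ‖z‖ • x := by rw [smul_inv_smul₀ (norm_ne_zero_iff.mpr hz)]
  refine ContinuousLinearMap.opNorm_le_bound₂ _ (by positivity) fun h k => ?_
  have hval : fderiv ℝ (fderiv ℝ fun w : F => ⟪y, w⟫ / ‖w‖) z h k =
      -⟪y, ⟪x, h⟫ • k + ⟪x, k⟫ • h + (⟪h, k⟫ - 3 * ⟪x, h⟫ * ⟪x, k⟫) • x⟫ / ‖z‖ ^ 2 := by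
    rw [fderiv_fderiv_inner_div_norm_apply y hz, hzx]
    simp only [inner_add_right, real_inner_smul_left, real_inner_smul_right, norm_smul, norm_norm,
      hx, mul_one]
    field_simp
    ring
  rw [hval, norm_div, norm_neg, norm_pow, norm_norm, Real.norm_eq_abs]
  calc |⟪y, _⟫| / ‖z‖ ^ 2 ≤ ‖y‖ * (2 / √3 * (‖h‖ * ‖k‖)) / ‖z‖ ^ 2 := by
        gcongr
        exact (abs_real_inner_le_norm _ _).trans (by gcongr; exact norm_hessianVector_le hx h k)
    _ = 2 / √3 * ‖y‖ / ‖z‖ ^ 2 * ‖h‖ * ‖k‖ := by ring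

end InnerDivNorm

section OperatorNorm

variable {𝕜 E F G : Type*} [NontriviallyNormedField 𝕜] [NormedAddCommGroup E] [NormedSpace 𝕜 E]
  [NormedAddCommGroup F] [NormedSpace 𝕜 F] [NormedAddCommGroup G] [NormedSpace 𝕜 G]

open Filter Topology in
theorem norm_fderiv_fderiv_comp_le (L : E →L[𝕜] F) {f : F → G} {x : E}
    (hf : ContDiffAt 𝕜 2 f (L x)) :
    ‖fderiv 𝕜 (fderiv 𝕜 (f ∘ L)) x‖ ≤ ‖fderiv 𝕜 (fderiv 𝕜 f) (L x)‖ * ‖L‖ ^ 2 := by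
  have hgrad : fderiv 𝕜 (f ∘ L) =ᶠ[𝓝 x] fun w => (fderiv 𝕜 f (L w)).comp L := by
    filter_upwards [(L.continuous.tendsto x).eventually (hf.eventually (by simp))] with w hw
    rw [fderiv_comp w (hw.differentiableAt two_ne_zero) L.differentiableAt, L.fderiv]
  have hD : HasFDerivAt (fun w => fderiv 𝕜 f (L w)) ((fderiv 𝕜 (fderiv 𝕜 f) (L x)).comp L) x :=
    ((hf.fderiv_right (by norm_num)).differentiableAt one_ne_zero).hasFDerivAt.comp x
      L.hasFDerivAt
  rw [hgrad.fderiv_eq, (hD.clm_comp (hasFDerivAt_const L x)).fderiv]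
  refine ContinuousLinearMap.opNorm_le_bound₂ _ (by positivity) fun h k => ?_
  simp only [ContinuousLinearMap.comp_zero, zero_add, ContinuousLinearMap.comp_apply,
    ContinuousLinearMap.flip_apply, ContinuousLinearMap.compL_apply]
  calc _ ≤ ‖fderiv 𝕜 (fderiv 𝕜 f) (L x)‖ * ‖L h‖ * ‖L k‖ := ContinuousLinearMap.le_opNorm₂ _ _ _
    _ ≤ ‖fderiv 𝕜 (fderiv 𝕜 f) (L x)‖ * (‖L‖ * ‖h‖) * (‖L‖ * ‖k‖) := by
        gcongr <;> exact L.le_opNorm _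
    _ = _ := by ring

theorem ContinuousLinearMap.sq_opNorm_le_of_sq_le {T : E →L[𝕜] F} {c : ℝ} (hc : 0 ≤ c)
    (h : ∀ x, ‖T x‖ ^ 2 ≤ c * ‖x‖ ^ 2) : ‖T‖ ^ 2 ≤ c := by
  have hT : ‖T‖ ≤ √c := T.opNorm_le_bound (Real.sqrt_nonneg c) fun x => by
    rw [← Real.sqrt_sq (norm_nonneg (T x)), ← Real.sqrt_sq (norm_nonneg x), ← Real.sqrt_mul hc]
    exact Real.sqrt_le_sqrt (h x)
  calc ‖T‖ ^ 2 ≤ √c ^ 2 := by gcongr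
    _ = c := Real.sq_sqrt hc

end OperatorNorm

open scoped MatrixOrder in
theorem exists_sInner_eq_inner {S : Matrix (Fin d) (Fin d) ℝ} (hS : S.PosSemidef) :
    ∃ R : EuclideanSpace ℝ (Fin d) →L[ℝ] EuclideanSpace ℝ (Fin d),
      ∀ a b, sInner S a b = ⟪R a, R b⟫ := by
  obtain ⟨B, rfl⟩ := CStarAlgebra.nonneg_iff_eq_star_mul_self.mp hS.nonneg
  set R := toEuclideanCLM (𝕜 := ℝ) B
  refine ⟨R, fun a b => ?_⟩
  have hRR : toEuclideanLin (star B * B) b = R.adjoint (R b) := by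
    rw [← coe_toEuclideanCLM_eq_toEuclideanLin, map_mul, map_star]
    rfl
  rw [sInner, hRR]
  exact R.adjoint_inner_right _ _

theorem sInner_self_pos {S : Matrix (Fin d) (Fin d) ℝ} (hS : S.PosDef)
    {u : EuclideanSpace ℝ (Fin d)} (hu : u ≠ 0) : 0 < sInner S u u := by
  rw [sInner, EuclideanSpace.inner_eq_star_dotProduct]
  simpa [dotProduct_comm] using hS.dotProduct_mulVec_pos (x := u.ofLp) (by simpa using hu)

theorem hessian_matCos_opNorm_general (S : Matrix (Fin d) (Fin d) ℝ) (hS : S.PosDef)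
    (lmax : ℝ) (hmax : ∀ x : EuclideanSpace ℝ (Fin d), sInner S x x ≤ lmax * ‖x‖ ^ 2)
    (u v : EuclideanSpace ℝ (Fin d)) (hu : u ≠ 0) :
    ‖fderiv ℝ (fderiv ℝ (fun w => sCos S w v)) u‖ ≤
      (2 / Real.sqrt 3) * lmax / (sNorm S u) ^ 2 := by
  obtain ⟨R, hR⟩ := exists_sInner_eq_inner hS.posSemidef
  have hnorm (a) : sNorm S a = ‖R a‖ := by
    rw [sNorm, hR, real_inner_self_eq_norm_sq, Real.sqrt_sq (norm_nonneg _)]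
  set y := ‖R v‖⁻¹ • R v
  have hcos : (fun w => sCos S w v) = (fun z => ⟪y, z⟫ / ‖z‖) ∘ R := by
    funext w
    rw [Function.comp_apply, sCos, hR, hnorm, hnorm, real_inner_smul_left, real_inner_comm]
    ring
  have hy : ‖y‖ ≤ 1 := by simpa using inv_norm_smul_mem_unitClosedBall (R v)
  have hRu : R u ≠ 0 := by
    rw [← norm_pos_iff, ← hnorm]
    exact Real.sqrt_pos.mpr (sInner_self_pos hS hu)
  have hlmax : 0 ≤ lmax :=
    (pos_of_mul_pos_left ((sInner_self_pos hS hu).trans_le (hmax u)) (by positivity)).le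
  have hR2 : ‖R‖ ^ 2 ≤ lmax := R.sq_opNorm_le_of_sq_le hlmax fun x => by
    rw [← real_inner_self_eq_norm_sq, ← hR]
    exact hmax x
  rw [hcos, hnorm]
  calc _ ≤ ‖fderiv ℝ (fderiv ℝ fun z => ⟪y, z⟫ / ‖z‖) (R u)‖ * ‖R‖ ^ 2 :=
        norm_fderiv_fderiv_comp_le R (contDiffAt_inner_div_norm y hRu)
    _ ≤ 2 / √3 * ‖y‖ / ‖R u‖ ^ 2 * lmax := by
        gcongr
        exact norm_fderiv_fderiv_inner_div_norm_le y hRu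
    _ ≤ 2 / √3 * 1 / ‖R u‖ ^ 2 * lmax := by gcongr
    _ = _ := by ring

/-- The (ℓ²→ℓ²) operator norm of the Hessian of `u ↦ cos_Σ(u,v)`
at a nonzero point `u` is at most `(2/√3) · λ_max / ‖u‖_Σ²`, where `λ_max` is the
largest eigenvalue of the positive definite matrix `Σ`. -/
theorem hessian_matCos_opNorm (S : Matrix (Fin d) (Fin d) ℝ) (hS : S.PosDef)
    (lmax : ℝ) (hmax : ∀ x : EuclideanSpace ℝ (Fin d), sInner S x x ≤ lmax * ‖x‖ ^ 2)
    (u v : EuclideanSpace ℝ (Fin d)) (hu : u ≠ 0) (hv : v ≠ 0) :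
    ‖fderiv ℝ (fderiv ℝ (fun w => sCos S w v)) u‖ ≤
      (2 / Real.sqrt 3) * lmax / (sNorm S u) ^ 2 :=
  hessian_matCos_opNorm_general S hS lmax hmax u v hu
end

section
/- Let H = ∇²_u cos(u,v) be the Euclidean Hessian of the cosine similarity with v ≠ 0 fixed, evaluated at u ≠ 0 with u and v linearly independent. Then H leaves span{u,v} invariant, every vector orthogonal to both u and v is an eigenvector with eigenvalue −(uᵀv)/(‖u‖³‖v‖), and the two eigenvalues of H restricted to span{u,v} are (−α ± √(4−3α²))/(2‖u‖²), where α = cos(u,v). -/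
/-! With `û = u/‖u‖`, `v̂ = v/‖v‖` and `α = ⟨û, v̂⟩`, the Hessian is
`‖u‖⁻² (3α ûûᵀ − α I − (ûv̂ᵀ + v̂ûᵀ))`. It is therefore `−α/‖u‖²` on vectors orthogonal to `u` and
`v`, and on the basis `û, v̂` of `span{u, v}` it acts by `‖u‖⁻² [[α, 3α² − 1], [−1, −2α]]`, whose
characteristic polynomial is `‖u‖⁻⁴ (μ² + αμ + α² − 1)` in `μ = ‖u‖² λ`. Its roots
`μ = (−α ± √(4 − 3α²))/2` are real because `α² ≤ 1` (Cauchy–Schwarz). -/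

open Matrix

variable {d : ℕ}

noncomputable def enormE (x : Fin d → ℝ) : ℝ := Real.sqrt (x ⬝ᵥ x)

noncomputable def ecos (u v : Fin d → ℝ) : ℝ := (u ⬝ᵥ v) / (enormE u * enormE v)

/-- The Euclidean Hessian of `u ↦ cos(u, v)`:
`H = 3 (uᵀv/(‖u‖⁵‖v‖)) uuᵀ − (uᵀv/(‖u‖³‖v‖)) I − (1/(‖u‖³‖v‖)) (uvᵀ + vuᵀ)`. -/
noncomputable def cosHessE (u v : Fin d → ℝ) : Matrix (Fin d) (Fin d) ℝ :=
  (3 * ((u ⬝ᵥ v) / ((enormE u) ^ 5 * enormE v))) • vecMulVec u u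
    - ((u ⬝ᵥ v) / ((enormE u) ^ 3 * enormE v)) • (1 : Matrix (Fin d) (Fin d) ℝ)
    - (1 / ((enormE u) ^ 3 * enormE v)) • (vecMulVec u v + vecMulVec v u)

/-- If `f` acts on `x, y` by the matrix `[[a, b], [c, e]]` and `μ` is a root of its characteristic
polynomial, then `(μ - e) • x + c • y` is a `μ`-eigenvector of `f`. -/
theorem LinearMap.apply_eigenvector_of_pair {R M : Type*} [CommRing R] [AddCommGroup M]
    [Module R M] (f : M →ₗ[R] M) {x y : M} {a b c e μ : R}
    (hx : f x = a • x + c • y) (hy : f y = b • x + e • y)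
    (hμ : μ * μ - (a + e) * μ + (a * e - b * c) = 0) :
    f ((μ - e) • x + c • y) = μ • ((μ - e) • x + c • y) := by
  rw [map_add, map_smul, map_smul, hx, hy]
  linear_combination (norm := module) -(hμ • x)

theorem neg_add_mul_sqrt_div_two_isRoot {α s : ℝ} (hα : α ^ 2 ≤ 1) (hs : s = 1 ∨ s = -1) :
    ((-α + s * √(4 - 3 * α ^ 2)) / 2) ^ 2 + α * ((-α + s * √(4 - 3 * α ^ 2)) / 2)
      + α ^ 2 - 1 = 0 := by
  have hsqrt : √(4 - 3 * α ^ 2) ^ 2 = 4 - 3 * α ^ 2 := Real.sq_sqrt (by linarith)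
  have hs2 : s ^ 2 = 1 := by rcases hs with rfl | rfl <;> norm_num
  linear_combination (s ^ 2 / 4) * hsqrt + ((4 - 3 * α ^ 2) / 4) * hs2

lemma enormE_sq (x : Fin d → ℝ) : enormE x ^ 2 = x ⬝ᵥ x :=
  Real.sq_sqrt (dotProduct_self_star_nonneg x)

lemma enormE_pos {x : Fin d → ℝ} (hx : x ≠ 0) : 0 < enormE x :=
  Real.sqrt_pos.mpr (dotProduct_self_star_pos_iff.mpr hx)

lemma enormE_eq_norm (x : Fin d → ℝ) : enormE x = ‖WithLp.toLp 2 x‖ := by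
  rw [norm_eq_sqrt_real_inner, EuclideanSpace.inner_toLp_toLp, star_trivial, enormE]

lemma ecos_sq_le_one (u v : Fin d → ℝ) : ecos u v ^ 2 ≤ 1 := by
  have h := abs_real_inner_div_norm_mul_norm_le_one (WithLp.toLp 2 u) (WithLp.toLp 2 v)
  rw [EuclideanSpace.inner_toLp_toLp, star_trivial, dotProduct_comm, ← enormE_eq_norm,
    ← enormE_eq_norm] at h
  exact (sq_le_one_iff_abs_le_one _).mpr h

lemma cosHessE_mulVec (u v w : Fin d → ℝ) :
    cosHessE u v *ᵥ w =
      (3 * (u ⬝ᵥ v) / (enormE u ^ 5 * enormE v) * (u ⬝ᵥ w)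
          - (v ⬝ᵥ w) / (enormE u ^ 3 * enormE v)) • u
        - ((u ⬝ᵥ v) / (enormE u ^ 3 * enormE v)) • w
        - ((u ⬝ᵥ w) / (enormE u ^ 3 * enormE v)) • v := by
  simp only [cosHessE, sub_mulVec, add_mulVec, smul_mulVec, one_mulVec, vecMulVec_mulVec,
    op_smul_eq_smul, smul_smul]
  module

noncomputable def unitE (x : Fin d → ℝ) : Fin d → ℝ := (enormE x)⁻¹ • x

lemma unitE_mem_span {x : Fin d → ℝ} {s : Set (Fin d → ℝ)} (hx : x ∈ s) :
    unitE x ∈ Submodule.span ℝ s :=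
  Submodule.smul_mem _ _ (Submodule.subset_span hx)

lemma LinearIndependent.unitE_pair {u v : Fin d → ℝ} (hind : LinearIndependent ℝ ![u, v]) :
    LinearIndependent ℝ ![unitE u, unitE v] := by
  have hn := (enormE_pos (by simpa using hind.ne_zero 0 : u ≠ 0)).ne'
  have hm := (enormE_pos (by simpa using hind.ne_zero 1 : v ≠ 0)).ne'
  rw [LinearIndependent.pair_iff] at hind ⊢
  intro p q h
  have := hind (p * (enormE u)⁻¹) (q * (enormE v)⁻¹) (by simpa only [unitE, smul_smul] using h)
  simpa [hn, hm] using this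

lemma cosHessE_mulVec_unitE_left {u v : Fin d → ℝ} (hu : u ≠ 0) (hv : v ≠ 0) :
    cosHessE u v *ᵥ unitE u =
      (ecos u v / enormE u ^ 2) • unitE u + (-1 / enormE u ^ 2) • unitE v := by
  have hn := (enormE_pos hu).ne'
  have hm := (enormE_pos hv).ne'
  simp only [unitE, cosHessE_mulVec, dotProduct_smul, smul_eq_mul, ← enormE_sq, ecos,
    dotProduct_comm v u]
  match_scalars <;> field_simp
  ring

lemma cosHessE_mulVec_unitE_right {u v : Fin d → ℝ} (hu : u ≠ 0) (hv : v ≠ 0) :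
    cosHessE u v *ᵥ unitE v =
      ((3 * ecos u v ^ 2 - 1) / enormE u ^ 2) • unitE u
        + (-2 * ecos u v / enormE u ^ 2) • unitE v := by
  have hn := (enormE_pos hu).ne'
  have hm := (enormE_pos hv).ne'
  simp only [unitE, cosHessE_mulVec, dotProduct_smul, smul_eq_mul, ← enormE_sq, ecos]
  match_scalars <;> field_simp
  ring

/-- The Euclidean Hessian `H` of `u ↦ cos(u,v)` (with `u, v` linearly
independent) leaves `span{u,v}` invariant; every vector orthogonal to both `u` and `v` is
an eigenvector with eigenvalue `−(uᵀv)/(‖u‖³‖v‖)`; and each of the two numbers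
`(−α ± √(4−3α²))/(2‖u‖²)`, `α = cos(u,v)`, is an eigenvalue of `H` restricted to
`span{u,v}` (i.e. admits a nonzero eigenvector lying in `span{u,v}`). -/
theorem cosHess_spectrum (u v : Fin d → ℝ) (hind : LinearIndependent ℝ ![u, v]) :
    (∀ w ∈ Submodule.span ℝ {u, v}, (cosHessE u v).mulVec w ∈ Submodule.span ℝ {u, v}) ∧
    (∀ w : Fin d → ℝ, w ⬝ᵥ u = 0 → w ⬝ᵥ v = 0 →
      (cosHessE u v).mulVec w = (-(u ⬝ᵥ v) / ((enormE u) ^ 3 * enormE v)) • w) ∧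
    (∀ s : ℝ, s = 1 ∨ s = -1 →
      ∃ w ∈ Submodule.span ℝ {u, v}, w ≠ 0 ∧
        (cosHessE u v).mulVec w =
          ((-(ecos u v) + s * Real.sqrt (4 - 3 * (ecos u v) ^ 2)) / (2 * (enormE u) ^ 2)) • w) := by
  have hu : u ≠ 0 := by simpa using hind.ne_zero 0
  have hv : v ≠ 0 := by simpa using hind.ne_zero 1
  have hu_mem : u ∈ Submodule.span ℝ {u, v} := Submodule.subset_span (by simp)
  have hv_mem : v ∈ Submodule.span ℝ {u, v} := Submodule.subset_span (by simp)
  refine ⟨fun w hw => ?_, fun w hwu hwv => ?_, fun s hs => ?_⟩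
  · rw [cosHessE_mulVec]
    exact sub_mem (sub_mem (Submodule.smul_mem _ _ hu_mem) (Submodule.smul_mem _ _ hw))
      (Submodule.smul_mem _ _ hv_mem)
  · rw [cosHessE_mulVec, dotProduct_comm u w, dotProduct_comm v w, hwu, hwv]
    simp [neg_div]
  · have hc : -1 / enormE u ^ 2 ≠ 0 := by
      have := (enormE_pos hu).ne'
      positivity
    refine ⟨_, add_mem (Submodule.smul_mem _ _ (unitE_mem_span (by simp)))
        (Submodule.smul_mem _ _ (unitE_mem_span (by simp))),
      fun h => hc (LinearIndependent.pair_iff.mp hind.unitE_pair _ _ h).2,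
      (cosHessE u v).mulVecLin.apply_eigenvector_of_pair (cosHessE_mulVec_unitE_left hu hv)
        (cosHessE_mulVec_unitE_right hu hv) ?_⟩
    linear_combination (1 / enormE u ^ 2) ^ 2
      * neg_add_mul_sqrt_div_two_isRoot (ecos_sq_le_one u v) hs
end

section
/- Let Σ be positive definite with largest and smallest eigenvalues λ_max, λ_min, let v ≠ 0, and let r > 0. The map u ↦ cos_Σ(u, v) is Lipschitz with constant λ_max^{1/2}/(r λ_min^{1/2}) on the set {u ∈ R^d : ‖u‖ ≥ r}, where ‖·‖ denotes the Euclidean norm. -/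
/-!
Write `a = ‖u‖_Σ`, `b = ‖u'‖_Σ`. Then `cos_Σ(u,v) - cos_Σ(u',v) = ⟪u/a - u'/b, v/‖v‖_Σ⟫_Σ`, and
`‖u/a - u'/b‖_Σ² = ‖u - u'‖_Σ²/(ab) - (a - b)²/(ab)`, so by Cauchy–Schwarz the difference is at
most `‖u - u'‖_Σ/√(ab)`. On `‖u‖, ‖u'‖ ≥ r` the eigenvalue bounds give `√(ab) ≥ r√λ_min` and
`‖u - u'‖_Σ ≤ √λ_max ‖u - u'‖`.
-/

open Matrix

variable {d : ℕ}

noncomputable def matNorm (S : Matrix (Fin d) (Fin d) ℝ) (x : Fin d → ℝ) : ℝ :=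
  Real.sqrt (x ⬝ᵥ S.mulVec x)

noncomputable def matCos (S : Matrix (Fin d) (Fin d) ℝ) (u v : Fin d → ℝ) : ℝ :=
  (u ⬝ᵥ S.mulVec v) / (matNorm S u * matNorm S v)

noncomputable def enorm (x : Fin d → ℝ) : ℝ := Real.sqrt (x ⬝ᵥ x)

open NormedSpace RealInnerProductSpace

section InnerProductSpace

variable {V : Type*} [NormedAddCommGroup V] [InnerProductSpace ℝ V]

lemma norm_normalize_le_one (x : V) : ‖normalize x‖ ≤ 1 := by
  rcases eq_or_ne x 0 with rfl | hx
  · simp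
  · exact (norm_normalize hx).le

lemma real_inner_div_norm_mul_norm_eq_inner_normalize (x y : V) :
    ⟪x, y⟫ / (‖x‖ * ‖y‖) = ⟪normalize x, normalize y⟫ := by
  rw [NormedSpace.normalize, NormedSpace.normalize, real_inner_smul_left, real_inner_smul_right]
  field_simp

lemma norm_normalize_sub_normalize_le {x y : V} (hx : x ≠ 0) (hy : y ≠ 0) :
    ‖normalize x - normalize y‖ ≤ ‖x - y‖ / √(‖x‖ * ‖y‖) := by
  have ha : 0 < ‖x‖ := norm_pos_iff.2 hx
  have hb : 0 < ‖y‖ := norm_pos_iff.2 hy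
  rw [le_div_iff₀ (by positivity), ← sq_le_sq₀ (by positivity) (by positivity), mul_pow,
    Real.sq_sqrt (by positivity), norm_sub_sq_real, norm_sub_sq_real,
    ← real_inner_div_norm_mul_norm_eq_inner_normalize, norm_normalize hx, norm_normalize hy]
  field_simp
  nlinarith [sq_nonneg (‖x‖ - ‖y‖), mul_pos ha hb]

lemma abs_real_inner_div_norm_mul_norm_sub_le {x y : V} (hx : x ≠ 0) (hy : y ≠ 0) (z : V) :
    |⟪x, z⟫ / (‖x‖ * ‖z‖) - ⟪y, z⟫ / (‖y‖ * ‖z‖)| ≤ ‖x - y‖ / √(‖x‖ * ‖y‖) :=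
  calc |⟪x, z⟫ / (‖x‖ * ‖z‖) - ⟪y, z⟫ / (‖y‖ * ‖z‖)|
      = |⟪normalize x - normalize y, normalize z⟫| := by
        rw [real_inner_div_norm_mul_norm_eq_inner_normalize,
          real_inner_div_norm_mul_norm_eq_inner_normalize, inner_sub_left]
    _ ≤ ‖normalize x - normalize y‖ * ‖normalize z‖ := abs_real_inner_le_norm _ _
    _ ≤ ‖normalize x - normalize y‖ :=
        mul_le_of_le_one_right (norm_nonneg _) (norm_normalize_le_one z)
    _ ≤ ‖x - y‖ / √(‖x‖ * ‖y‖) := norm_normalize_sub_normalize_le hx hy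

end InnerProductSpace

lemma matNorm_le_sqrt_mul_enorm {S : Matrix (Fin d) (Fin d) ℝ} {c : ℝ} {x : Fin d → ℝ}
    (h : x ⬝ᵥ S *ᵥ x ≤ c * (x ⬝ᵥ x)) : matNorm S x ≤ √c * _root_.enorm x := by
  have hx : 0 ≤ x ⬝ᵥ x := Finset.sum_nonneg fun i _ => mul_self_nonneg (x i)
  rw [matNorm, _root_.enorm, ← Real.sqrt_mul' c hx]
  exact Real.sqrt_le_sqrt h

lemma sqrt_mul_enorm_le_matNorm {S : Matrix (Fin d) (Fin d) ℝ} {c : ℝ} {x : Fin d → ℝ}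
    (h : c * (x ⬝ᵥ x) ≤ x ⬝ᵥ S *ᵥ x) : √c * _root_.enorm x ≤ matNorm S x := by
  have hx : 0 ≤ x ⬝ᵥ x := Finset.sum_nonneg fun i _ => mul_self_nonneg (x i)
  rw [matNorm, _root_.enorm, ← Real.sqrt_mul' c hx]
  exact Real.sqrt_le_sqrt h

lemma abs_matCos_sub_matCos_le {S : Matrix (Fin d) (Fin d) ℝ} (hS : S.PosDef)
    {u u' : Fin d → ℝ} (hu : u ≠ 0) (hu' : u' ≠ 0) (v : Fin d → ℝ) :
    |matCos S u v - matCos S u' v| ≤ matNorm S (u - u') / √(matNorm S u * matNorm S u') := by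
  -- `Fin d → ℝ` already carries the sup norm, so the Σ-geometry is passed explicitly.
  let E := S.toNormedAddCommGroup hS
  let I := S.toInnerProductSpace hS.posSemidef
  have inner_eq (x y : Fin d → ℝ) : @inner ℝ _ I.toInner x y = x ⬝ᵥ S *ᵥ y := dotProduct_comm _ _
  have norm_eq (x : Fin d → ℝ) : @norm _ E.toNorm x = matNorm S x := by
    rw [@norm_eq_sqrt_real_inner _ E.toSeminormedAddCommGroup I, inner_eq, matNorm]
  simpa only [matCos, norm_eq, inner_eq] using
    @abs_real_inner_div_norm_mul_norm_sub_le _ E I u u' hu hu' v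

theorem matCos_lipschitzOn_general (S : Matrix (Fin d) (Fin d) ℝ) (hS : S.PosDef)
    (lmax lmin : ℝ) (hlmin : 0 < lmin)
    (hmax : ∀ x : Fin d → ℝ, x ⬝ᵥ S.mulVec x ≤ lmax * (x ⬝ᵥ x))
    (hmin : ∀ x : Fin d → ℝ, lmin * (x ⬝ᵥ x) ≤ x ⬝ᵥ S.mulVec x)
    (v : Fin d → ℝ) (r : ℝ) (hr : 0 < r) :
    ∀ u u' : Fin d → ℝ, r ≤ _root_.enorm u → r ≤ _root_.enorm u' →
      |matCos S u v - matCos S u' v| ≤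
        Real.sqrt lmax / (r * Real.sqrt lmin) * _root_.enorm (u - u') := by
  intro u u' hu hu'
  have hrl : 0 < r * √lmin := mul_pos hr (Real.sqrt_pos.2 hlmin)
  have lower {x : Fin d → ℝ} (hx : r ≤ _root_.enorm x) : r * √lmin ≤ matNorm S x :=
    calc r * √lmin ≤ √lmin * _root_.enorm x := by rw [mul_comm]; gcongr
      _ ≤ matNorm S x := sqrt_mul_enorm_le_matNorm (hmin x)
  have ne_zero {x : Fin d → ℝ} (hx : r ≤ _root_.enorm x) : x ≠ 0 := by
    rintro rfl
    have := lower hx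
    simp only [matNorm, zero_dotProduct, Real.sqrt_zero] at this
    linarith
  have denom : r * √lmin ≤ √(matNorm S u * matNorm S u') := by
    rw [Real.le_sqrt' hrl, sq]
    exact mul_le_mul (lower hu) (lower hu') hrl.le (hrl.le.trans (lower hu))
  calc |matCos S u v - matCos S u' v|
      ≤ matNorm S (u - u') / √(matNorm S u * matNorm S u') :=
        abs_matCos_sub_matCos_le hS (ne_zero hu) (ne_zero hu') v
    _ ≤ √lmax * _root_.enorm (u - u') / (r * √lmin) :=
        div_le_div₀ (mul_nonneg (Real.sqrt_nonneg _) (Real.sqrt_nonneg _))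
          (matNorm_le_sqrt_mul_enorm (hmax _)) hrl denom
    _ = √lmax / (r * √lmin) * _root_.enorm (u - u') := by ring

/-- For positive definite `Σ` with eigenvalue bounds
`λ_min ‖x‖² ≤ ‖x‖_Σ² ≤ λ_max ‖x‖²` and `v ≠ 0`, the map `u ↦ cos_Σ(u, v)` is
`√λ_max/(r √λ_min)`-Lipschitz on `{u : ‖u‖ ≥ r}` (Euclidean norm), for `r > 0`. -/
theorem matCos_lipschitzOn (S : Matrix (Fin d) (Fin d) ℝ) (hS : S.PosDef)
    (lmax lmin : ℝ) (hlmin : 0 < lmin)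
    (hmax : ∀ x : Fin d → ℝ, x ⬝ᵥ S.mulVec x ≤ lmax * (x ⬝ᵥ x))
    (hmin : ∀ x : Fin d → ℝ, lmin * (x ⬝ᵥ x) ≤ x ⬝ᵥ S.mulVec x)
    (v : Fin d → ℝ) (hv : v ≠ 0) (r : ℝ) (hr : 0 < r) :
    ∀ u u' : Fin d → ℝ, r ≤ _root_.enorm u → r ≤ _root_.enorm u' →
      |matCos S u v - matCos S u' v| ≤
        Real.sqrt lmax / (r * Real.sqrt lmin) * _root_.enorm (u - u') :=
  matCos_lipschitzOn_general S hS lmax lmin hlmin hmax hmin v r hr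
end
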